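/- Let k ≥ 3 be an integer, let G be a finite simple graph with m edges, and let (V_1, …, V_k) be a k-partition of G such that every vertex x ∈ V_1 satisfies |N(x) ∖ V_1| ≥ (k−1)·|N(x) ∩ V_1|. Write e(V_1) = m/k² + β_1. Let v ∈ V_1 with d := |N(v) ∩ V_1| ≥ 1, set Y_1 := V_1 ∖ {v}, let x := e(Y_1, V(G) ∖ Y_1) and m' := e(V(G) ∖ Y_1). Then 2(k−1)·(m/k² + β_1) − (k−2)·d ≤ x ≤ (k²−1)/k²·m − β_1 + d, and m' ≤ (k−1)²/k²·m − (2k−1)·β_1 + (k−1)·d. -/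

import Mathlib

open Finset

noncomputable def hfun (x : ℝ) : ℝ := Real.sqrt (2 * x + 1 / 4) - 1 / 2

variable {V : Type*} [Fintype V] [DecidableEq V]

/-- Number of edges of `G` with both endpoints in `S`. -/
def eIn (G : SimpleGraph V) [DecidableRel G.Adj] (S : Finset V) : ℕ :=
  (Finset.univ.filter (fun p : V × V => G.Adj p.1 p.2 ∧ p.1 ∈ S ∧ p.2 ∈ S)).card / 2

/-- Number of edges of `G` with one endpoint in `S` and the other in `T` (for disjoint `S`, `T`). -/
def eCross (G : SimpleGraph V) [DecidableRel G.Adj] (S T : Finset V) : ℕ :=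
  (Finset.univ.filter (fun p : V × V => G.Adj p.1 p.2 ∧ p.1 ∈ S ∧ p.2 ∈ T)).card

/-- `P` is a partition of the vertex set into `k` pairwise disjoint (possibly empty) parts. -/
def IsKPartition {k : ℕ} (P : Fin k → Finset V) : Prop :=
  (∀ i j : Fin k, i ≠ j → Disjoint (P i) (P j)) ∧ ∀ v : V, ∃ i, v ∈ P i

/-- The number of crossing edges of a `k`-partition. -/
def crossTotal (G : SimpleGraph V) [DecidableRel G.Adj] {k : ℕ} (P : Fin k → Finset V) : ℕ :=
  ∑ i : Fin k, ∑ j : Fin k, if i < j then eCross G (P i) (P j) else 0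

/-- `f_k(G)`: the maximum number of crossing edges over all `k`-partitions of `G`. -/
noncomputable def maxCut (G : SimpleGraph V) [DecidableRel G.Adj] (k : ℕ) : ℕ :=
  sSup {n : ℕ | ∃ P : Fin k → Finset V, IsKPartition P ∧ crossTotal G P = n}


/-!
Put `Y = V₁ \ {v}`. Removing `v` from `V₁` deletes exactly the `d` edges at `v` inside `V₁`, so
`e(Y) = e(V₁) - d`, while `m = e(Y) + x + m'`. Summing the neighbourhood condition over `u ∈ Y`
bounds the edges leaving `V₁` from `Y` below by `(k - 1) (2 e(Y) + d)`; the `d` edges from `Y`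
to `v` also leave `Y`, so `x ≥ (k - 1) (2 e(Y) + d) + d`. The three bounds are linear
consequences of these identities (with `m' ≥ 0` for the upper bound on `x`).
-/

section EdgeCounts

variable (G : SimpleGraph V) [DecidableRel G.Adj]

lemma eCross_eq_sum (S T : Finset V) :
    eCross G S T = ∑ u ∈ S, #(G.neighborFinset u ∩ T) := by
  rw [eCross, card_filter, Fintype.sum_prod_type, ← sum_subset (subset_univ S)]
  · refine sum_congr rfl fun u hu => ?_
    rw [← card_filter]
    congr 1
    ext w
    simp [hu]
  · intro u _ hu
    simp [hu]

lemma eCross_comm (S T : Finset V) : eCross G S T = eCross G T S := by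
  refine card_nbij' Prod.swap Prod.swap ?_ ?_ (fun _ _ => rfl) (fun _ _ => rfl) <;>
  · intro p hp
    simp only [coe_filter, mem_univ, true_and, Set.mem_ofPred_eq, Prod.fst_swap,
      Prod.snd_swap] at hp ⊢
    exact ⟨hp.1.symm, hp.2.2, hp.2.1⟩

lemma eCross_union_left {S S' : Finset V} (hS : Disjoint S S') (T : Finset V) :
    eCross G (S ∪ S') T = eCross G S T + eCross G S' T := by
  simp only [eCross_eq_sum, sum_union hS]

lemma eCross_union_right (S : Finset V) {T T' : Finset V} (hT : Disjoint T T') :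
    eCross G S (T ∪ T') = eCross G S T + eCross G S T' := by
  simp only [eCross_eq_sum, inter_union_distrib_left, ← sum_add_distrib]
  exact sum_congr rfl fun u _ => card_union_of_disjoint (hT.mono inf_le_right inf_le_right)

lemma eCross_singleton_left (v : V) (T : Finset V) :
    eCross G {v} T = #(G.neighborFinset v ∩ T) := by
  rw [eCross_eq_sum, sum_singleton]

lemma eCross_insert_right (S : Finset V) {T : Finset V} {v : V} (hv : v ∉ T) :
    eCross G S (insert v T) = eCross G S T + #(G.neighborFinset v ∩ S) := by
  rw [insert_eq, eCross_union_right G S (disjoint_singleton_left.2 hv), eCross_comm G S {v},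
    eCross_singleton_left, add_comm]

lemma even_eCross_self (S : Finset V) : Even (eCross G S S) := by
  classical
  let H : SimpleGraph V := ((⊤ : G.Subgraph).induce S).spanningCoe
  have hH : eCross G S S = ∑ u, H.degree u := by
    rw [eCross, card_filter, Fintype.sum_prod_type]
    simp_rw [← H.card_neighborFinset_eq_degree, H.neighborFinset_eq_filter, card_filter]
    simp [H, and_comm, and_assoc]
  rw [hH, H.sum_degrees_eq_twice_card_edges]
  exact even_two_mul _

lemma two_mul_eIn (S : Finset V) : 2 * eIn G S = eCross G S S :=
  Nat.mul_div_cancel' (even_eCross_self G S).two_dvd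

lemma neighborFinset_inter_insert_self (v : V) (S : Finset V) :
    G.neighborFinset v ∩ insert v S = G.neighborFinset v ∩ S :=
  inter_insert_of_notMem (G.notMem_neighborFinset_self v)

lemma neighborFinset_inter_erase_self (v : V) (S : Finset V) :
    G.neighborFinset v ∩ S.erase v = G.neighborFinset v ∩ S := by
  rw [inter_erase, erase_eq_of_notMem fun h =>
    G.notMem_neighborFinset_self v (mem_of_mem_inter_left h)]

lemma eIn_insert (S : Finset V) {v : V} (hv : v ∉ S) :
    eIn G (insert v S) = eIn G S + #(G.neighborFinset v ∩ S) := by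
  have h := two_mul_eIn G (insert v S)
  rw [eCross_insert_right G _ hv, insert_eq, eCross_union_left G (disjoint_singleton_left.2 hv),
    eCross_singleton_left, ← insert_eq, neighborFinset_inter_insert_self, ← two_mul_eIn] at h
  omega

lemma card_edgeFinset_eq_eIn_add_eCross_add_eIn (S : Finset V) :
    #G.edgeFinset = eIn G S + eCross G S (univ \ S) + eIn G (univ \ S) := by
  have hS : Disjoint S (univ \ S) := disjoint_sdiff
  have h : 2 * #G.edgeFinset = eCross G (S ∪ (univ \ S)) (S ∪ (univ \ S)) := by
    simp [union_sdiff_of_subset (subset_univ S), eCross_eq_sum,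
      ← G.sum_degrees_eq_twice_card_edges]
  rw [eCross_union_left G hS, eCross_union_right G _ hS, eCross_union_right G _ hS,
    eCross_comm G (univ \ S) S, ← two_mul_eIn, ← two_mul_eIn] at h
  omega

lemma mul_eCross_le_eCross_compl (c : ℕ) {A S : Finset V} (hSA : S ⊆ A)
    (hA : ∀ u ∈ A, c * #(G.neighborFinset u ∩ A) ≤ #(G.neighborFinset u \ A)) :
    c * eCross G S A ≤ eCross G S (univ \ A) := by
  rw [eCross_eq_sum, eCross_eq_sum, mul_sum]
  refine sum_le_sum fun u hu => ?_
  rw [← compl_eq_univ_sdiff, ← sdiff_eq_inter_compl]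
  exact hA u (hSA hu)

end EdgeCounts

section RemoveVertex

variable (G : SimpleGraph V) [DecidableRel G.Adj] {A : Finset V} {v : V}

lemma eIn_eq_eIn_erase_add (hv : v ∈ A) :
    eIn G A = eIn G (A.erase v) + #(G.neighborFinset v ∩ A) := by
  conv_lhs => rw [← insert_erase hv]
  rw [eIn_insert G _ (notMem_erase v A), neighborFinset_inter_erase_self]

lemma mul_add_le_eCross_erase (c : ℕ) (hv : v ∈ A)
    (hA : ∀ u ∈ A, c * #(G.neighborFinset u ∩ A) ≤ #(G.neighborFinset u \ A)) :
    c * (2 * eIn G (A.erase v) + #(G.neighborFinset v ∩ A)) + #(G.neighborFinset v ∩ A) ≤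
      eCross G (A.erase v) (univ \ A.erase v) := by
  set Y := A.erase v
  have hvY : v ∉ Y := notMem_erase v A
  have hd : #(G.neighborFinset v ∩ Y) = #(G.neighborFinset v ∩ A) :=
    congrArg card (neighborFinset_inter_erase_self G v A)
  have hYA : eCross G Y A = 2 * eIn G Y + #(G.neighborFinset v ∩ A) := by
    rw [← insert_erase hv, eCross_insert_right G Y hvY, two_mul_eIn, hd, insert_erase hv]
  have hcompl : univ \ Y = insert v (univ \ A) := by
    ext w
    by_cases hw : w = v <;> simp [Y, hw, hv]
  have hcut : eCross G Y (univ \ Y) = eCross G Y (univ \ A) + #(G.neighborFinset v ∩ A) := by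
    rw [hcompl, eCross_insert_right G Y (by simp [hv]), hd]
  have hQ : c * eCross G Y A ≤ eCross G Y (univ \ A) :=
    mul_eCross_le_eCross_compl G c (erase_subset v A) hA
  rw [hYA] at hQ
  omega

end RemoveVertex

/-- Edge-distribution bounds after removing a vertex from the first part of a partition
satisfying property Q. -/
theorem stmt_15 {V : Type*} [Fintype V] [DecidableEq V]
    (G : SimpleGraph V) [DecidableRel G.Adj] (k : ℕ) (hk : 3 ≤ k)
    (m : ℕ) (hm : m = G.edgeFinset.card)
    (V1 : Finset V)
    (hQ : ∀ x ∈ V1,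
      (k - 1) * (G.neighborFinset x ∩ V1).card ≤ (G.neighborFinset x \ V1).card)
    (β1 : ℝ) (hβ : (eIn G V1 : ℝ) = (m : ℝ) / k ^ 2 + β1)
    (v : V) (hv : v ∈ V1) (d : ℕ) (hd : d = (G.neighborFinset v ∩ V1).card)
    (Y1 : Finset V) (hY1 : Y1 = V1 \ {v})
    (x : ℕ) (hx : x = eCross G Y1 (Finset.univ \ Y1))
    (m' : ℕ) (hm' : m' = eIn G (Finset.univ \ Y1)) :
    (2 * ((k : ℝ) - 1) * ((m : ℝ) / k ^ 2 + β1) - ((k : ℝ) - 2) * d ≤ (x : ℝ) ∧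
      (x : ℝ) ≤ ((k : ℝ) ^ 2 - 1) / k ^ 2 * m - β1 + d) ∧
    (m' : ℝ) ≤ ((k : ℝ) - 1) ^ 2 / k ^ 2 * m - (2 * (k : ℝ) - 1) * β1 + ((k : ℝ) - 1) * d := by
  rw [sdiff_singleton_eq_erase] at hY1
  have hm_split : (m : ℝ) = eIn G Y1 + x + m' := by
    rw [hm, hx, hm', hY1, card_edgeFinset_eq_eIn_add_eCross_add_eIn G (V1.erase v)]
    push_cast
    ring
  have hV1 : (eIn G V1 : ℝ) = eIn G Y1 + d := by
    rw [hY1, hd, eIn_eq_eIn_erase_add G hv]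
    push_cast
    ring
  have hcut : ((k : ℝ) - 1) * (2 * eIn G Y1 + d) + d ≤ x := by
    have h := mul_add_le_eCross_erase G (k - 1) hv hQ
    rw [← hd, ← hY1, ← hx] at h
    have hR := (Nat.cast_le (α := ℝ)).2 h
    push_cast [Nat.cast_sub (by omega : 1 ≤ k)] at hR
    exact hR
  have hk0 : (k : ℝ) ≠ 0 := by exact_mod_cast (by omega : k ≠ 0)
  refine ⟨⟨?_, ?_⟩, ?_⟩
  · rw [← hβ]
    linear_combination hcut + 2 * ((k : ℝ) - 1) * hV1
  · have hcoef : ((k : ℝ) ^ 2 - 1) / k ^ 2 * m - β1 = m - (m / k ^ 2 + β1) := by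
      field_simp
      ring
    rw [hcoef, ← hβ]
    linarith
  · have hcoef : ((k : ℝ) - 1) ^ 2 / k ^ 2 * m - (2 * k - 1) * β1 =
        m - (2 * k - 1) * (m / k ^ 2 + β1) := by
      field_simp
      ring
    rw [hcoef, ← hβ]
    linear_combination hcut + (2 * (k : ℝ) - 1) * hV1 - hm_split
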